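/- Suppose f_ρ = L_K^r h_ρ for some h_ρ ∈ L²_{ρ_X} with 1/2 ≤ r ≤ 1 and let f_λ = (L_K + λI)⁻¹ L_K f_ρ. Then ‖f_λ − f_ρ‖_K ≤ λ^{r−1/2} ‖h_ρ‖_ρ, where ‖g‖_K = ‖L_K^{−1/2} g‖_ρ for g in the range of L_K^{1/2}. -/
import Mathlib

lemma key_ineq (a lam r : ℝ) (ha : 0 < a) (hlam : 0 < lam)
    (hr1 : 1 / 2 ≤ r) (hr2 : r ≤ 1) (c : ℝ) :
    (a / (a + lam) * (a ^ r * c) - a ^ r * c) ^ 2 / a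
      ≤ lam ^ (2 * r - 1) * c ^ 2 := by
  have hs : 0 < a + lam := by linarith
  have e1 : a / (a + lam) * (a ^ r * c) - a ^ r * c
      = -(lam / (a + lam)) * (a ^ r * c) := by
    field_simp
    ring
  have har : (0:ℝ) ≤ a ^ r := (Real.rpow_pos_of_pos ha r).le
  have e2 : (a ^ r) ^ 2 / a = a ^ (2 * r - 1) := by
    rw [← Real.rpow_natCast (a ^ r) 2, ← Real.rpow_mul ha.le,
      ← Real.rpow_sub_one ha.ne']
    norm_num [mul_comm]
  -- weighted AM-GM
  have hamgm : a ^ (2 * r - 1) * lam ^ (2 - 2 * r) ≤ a + lam := by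
    have := Real.geom_mean_le_arith_mean2_weighted
      (w₁ := 2 * r - 1) (w₂ := 2 - 2 * r) (p₁ := a) (p₂ := lam)
      (by linarith) (by linarith) ha.le hlam.le (by ring)
    calc a ^ (2 * r - 1) * lam ^ (2 - 2 * r)
        ≤ (2 * r - 1) * a + (2 - 2 * r) * lam := this
      _ ≤ a + lam := by nlinarith
  have hmain : lam ^ 2 * a ^ (2 * r - 1) ≤ lam ^ (2 * r - 1) * (a + lam) ^ 2 := by
    have hl : (lam:ℝ) ^ 2 = lam ^ (2 * r - 1) * (lam * lam ^ (2 - 2 * r)) := by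
      rw [mul_comm lam (lam ^ (2 - 2*r)), ← Real.rpow_add_one hlam.ne',
        ← Real.rpow_add hlam, show 2*r-1+(2-2*r+1) = ((2:ℕ):ℝ) by push_cast; ring,
        Real.rpow_natCast]
    rw [hl]
    have : lam * (a ^ (2 * r - 1) * lam ^ (2 - 2 * r)) ≤ (a + lam) ^ 2 := by
      nlinarith [Real.rpow_nonneg ha.le (2 * r - 1),
        Real.rpow_nonneg hlam.le (2 - 2 * r)]
    have hlp := Real.rpow_nonneg hlam.le (2 * r - 1)
    nlinarith
  have hkey : (lam / (a + lam)) ^ 2 * a ^ (2 * r - 1) ≤ lam ^ (2 * r - 1) := by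
    rw [div_pow, div_mul_eq_mul_div, div_le_iff₀ (by positivity)]
    linarith [hmain]
  calc (a / (a + lam) * (a ^ r * c) - a ^ r * c) ^ 2 / a
      = ((lam / (a + lam)) ^ 2 * a ^ (2 * r - 1)) * c ^ 2 := by
        rw [e1, ← e2]; ring
    _ ≤ lam ^ (2 * r - 1) * c ^ 2 := by
        have := sq_nonneg c
        nlinarith [hkey]

/-- **Approximation error bound in RKHS norm `‖f_λ − f_ρ‖_K ≤ λ^{r−1/2} ‖h_ρ‖_ρ`**,
in spectral form: with eigenvalues `0 < μ i` of the positive compact injective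
self-adjoint operator `L_K`, `f_ρ = L_K^r h_ρ` has coordinates `μ i ^ r * h i`,
`f_λ = (L_K + λI)⁻¹ L_K f_ρ` has coordinates `μ i/(μ i + λ) * (μ i ^ r * h i)`,
and `‖g‖_K² = ‖L_K^{−1/2} g‖_ρ² = ∑ gᵢ²/μᵢ`; the claim becomes
`∑ (f_λᵢ − f_ρᵢ)²/μᵢ ≤ (λ^{r−1/2})² ∑ hᵢ² = λ^{2r−1} ∑ hᵢ²`. -/
theorem stmt5 (μ h : ℕ → ℝ) (lam r : ℝ) (hlam : 0 < lam)
    (hr1 : 1 / 2 ≤ r) (hr2 : r ≤ 1) (hμ : ∀ i, 0 < μ i)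
    (hh : Summable fun i => (h i) ^ 2) :
    (∑' i, (μ i / (μ i + lam) * (μ i ^ r * h i) - μ i ^ r * h i) ^ 2 / μ i)
      ≤ lam ^ (2 * r - 1) * ∑' i, (h i) ^ 2 := by
  have hkey : ∀ i, (μ i / (μ i + lam) * (μ i ^ r * h i) - μ i ^ r * h i) ^ 2 / μ i
      ≤ lam ^ (2 * r - 1) * (h i) ^ 2 := fun i =>
    key_ineq (μ i) lam r (hμ i) hlam hr1 hr2 (h i)
  have hrs : Summable fun i => lam ^ (2 * r - 1) * (h i) ^ 2 := hh.mul_left _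
  have hls : Summable fun i =>
      (μ i / (μ i + lam) * (μ i ^ r * h i) - μ i ^ r * h i) ^ 2 / μ i :=
    Summable.of_nonneg_of_le (fun i => div_nonneg (sq_nonneg _) (hμ i).le) hkey hrs
  calc (∑' i, (μ i / (μ i + lam) * (μ i ^ r * h i) - μ i ^ r * h i) ^ 2 / μ i)
      ≤ ∑' i, lam ^ (2 * r - 1) * (h i) ^ 2 := Summable.tsum_le_tsum hkey hls hrs
    _ = lam ^ (2 * r - 1) * ∑' i, (h i) ^ 2 := tsum_mul_left
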